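/- For dual elements q₁, q₂: |q₁ + q₂| ≤ |q₁| + |q₂| in the lexicographic order on dual numbers. -/

import Mathlib

/-!
Write `u(a) = a / ‖a‖` for `a ≠ 0`. Since `(a* x + x* a) / 2` is the inner product `⟪a, x⟫`, the
dual part of `|a + x ε|` is `⟪u(a), x⟫`, or `‖x‖` when `a = 0`; in both cases it is subadditive
in `x` and bounded by `‖x‖` (Cauchy–Schwarz). If `‖a + b‖ < ‖a‖ + ‖b‖` the primal parts already
decide the order. Otherwise `a` and `b` lie on the same ray: if one of them vanishes the bound
`‖x‖` finishes, and if neither does then `u(a) = u(b) = u(a + b)`, so the dual parts add up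
exactly.
-/

open TrivSqZeroExt

noncomputable section
open Classical

local notation "ℍ" => Quaternion ℝ

/-- The magnitude of a dual quaternion, as a dual (real) number. -/
def dmagH (p : DualNumber ℍ) : DualNumber ℝ :=
  if p.fst ≠ 0 then
    inl ‖p.fst‖ + inr ((star p.fst * p.snd + star p.snd * p.fst).re / (2 * ‖p.fst‖))
  else inr ‖p.snd‖

/-- The lexicographic (total) order on dual numbers: `a ≤ b` iff `a_s < b_s`, or
`a_s = b_s` and `a_d ≤ b_d`. -/
def dle (a b : DualNumber ℝ) : Prop := a.fst < b.fst ∨ (a.fst = b.fst ∧ a.snd ≤ b.snd)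

section InnerProductSpace

variable {E : Type*} [NormedAddCommGroup E] [InnerProductSpace ℝ E]

def normDualPart (a x : E) : ℝ :=
  if a = 0 then ‖x‖ else inner ℝ (‖a‖⁻¹ • a) x

theorem normDualPart_zero_left (x : E) : normDualPart 0 x = ‖x‖ := by
  simp [normDualPart]

theorem normDualPart_of_ne_zero {a : E} (ha : a ≠ 0) (x : E) :
    normDualPart a x = inner ℝ (‖a‖⁻¹ • a) x := by
  simp [normDualPart, ha]

theorem normDualPart_le_norm (a x : E) : normDualPart a x ≤ ‖x‖ := by
  by_cases ha : a = 0
  · rw [ha, normDualPart_zero_left]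
  · rw [normDualPart_of_ne_zero ha]
    calc inner ℝ (‖a‖⁻¹ • a) x ≤ ‖‖a‖⁻¹ • a‖ * ‖x‖ := real_inner_le_norm _ _
      _ = ‖x‖ := by simp [norm_smul, ha]

theorem normDualPart_add_le (a x y : E) :
    normDualPart a (x + y) ≤ normDualPart a x + normDualPart a y := by
  by_cases ha : a = 0
  · simpa only [ha, normDualPart_zero_left] using norm_add_le x y
  · simp only [normDualPart_of_ne_zero ha, inner_add_right, le_refl]

theorem SameRay.normDualPart_eq {a b : E} (h : SameRay ℝ a b) (ha : a ≠ 0) (hb : b ≠ 0) :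
    normDualPart a = normDualPart b := by
  ext x
  rw [normDualPart_of_ne_zero ha, normDualPart_of_ne_zero hb,
    (sameRay_iff_inv_norm_smul_eq_of_ne ha hb).mp h]

theorem normDualPart_add_le_of_norm_add_eq {a b : E} (h : ‖a + b‖ = ‖a‖ + ‖b‖) (x y : E) :
    normDualPart (a + b) (x + y) ≤ normDualPart a x + normDualPart b y := by
  by_cases ha : a = 0
  · subst ha
    rw [zero_add, normDualPart_zero_left]
    linarith [normDualPart_add_le b x y, normDualPart_le_norm b x]
  by_cases hb : b = 0
  · subst hb
    rw [add_zero, normDualPart_zero_left]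
    linarith [normDualPart_add_le a x y, normDualPart_le_norm a y]
  have hab : SameRay ℝ a b := sameRay_iff_norm_add.mpr h
  have hab₀ : a + b ≠ 0 := by
    rw [← norm_ne_zero_iff, h]
    positivity
  calc normDualPart (a + b) (x + y) = normDualPart a (x + y) :=
        by rw [((SameRay.refl a).add_right hab).normDualPart_eq ha hab₀]
    _ ≤ normDualPart a x + normDualPart a y := normDualPart_add_le a x y
    _ = normDualPart a x + normDualPart b y := by
        rw [congrFun (hab.normDualPart_eq ha hb) y]

end InnerProductSpace

theorem Quaternion.re_star_mul_add_star_mul (a c : ℍ) :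
    (star a * c + star c * a).re = 2 * inner ℝ a c := by
  simp only [Quaternion.inner_def, Quaternion.re_add, Quaternion.re_mul, Quaternion.re_star,
    Quaternion.imI_star, Quaternion.imJ_star, Quaternion.imK_star]
  ring

theorem dmagH_fst (p : DualNumber ℍ) : (dmagH p).fst = ‖p.fst‖ := by
  by_cases h : p.fst = 0 <;> simp [dmagH, h]

theorem dmagH_snd (p : DualNumber ℍ) : (dmagH p).snd = normDualPart p.fst p.snd := by
  by_cases h : p.fst = 0
  · simp [dmagH, h, normDualPart_zero_left]
  · have hn : ‖p.fst‖ ≠ 0 := norm_ne_zero_iff.mpr h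
    rw [dmagH, if_pos h, normDualPart_of_ne_zero h, snd_add, snd_inl, snd_inr, zero_add,
      Quaternion.re_star_mul_add_star_mul, real_inner_smul_left]
    field_simp

/-- Triangle inequality for dual quaternions: `|q₁ + q₂| ≤ |q₁| + |q₂|` in the
lexicographic order on dual numbers. -/
theorem dual_mag_triangle (q₁ q₂ : DualNumber ℍ) :
    dle (dmagH (q₁ + q₂)) (dmagH q₁ + dmagH q₂) := by
  unfold dle
  simp only [fst_add, snd_add, dmagH_fst, dmagH_snd]
  rcases (norm_add_le q₁.fst q₂.fst).lt_or_eq with hlt | heq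
  · exact Or.inl hlt
  · exact Or.inr ⟨heq, normDualPart_add_le_of_norm_add_eq heq _ _⟩
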